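/- Let Σ = {α, S₀, ϑ₁, ϑ₂} be a strongly admissible quadruple and let k be a positive integer. Define ϑ₁(t) = e^{−itα^k}ϑ₁, ϑ₂(t) = e^{itα^k}ϑ₂, Λ(t) = [ϑ₁(t), ϑ₂(t)], and S(t) = S₀ + ∫₀ᵗ Σ_{ν=1}^{k} α^{ν−1}Λ(s) j Λ(s)* (α*)^{k−ν} ds for t ∈ ℝ. Then for every t ∈ ℝ the quadruple Σ(t) = {α, S(t), ϑ₁(t), ϑ₂(t)} is strongly admissible: S(t) is Hermitian positive definite, αS(t) − S(t)α* = iΛ(t)Λ(t)*, and the pair (α, ϑ₁(t)) is controllable. -/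

import Mathlib

/-!
Along the flow, `S' = Σ_ν α^ν (ΛjΛ*) α*^{k-1-ν}` and `(ΛΛ*)' = -i(α^k ΛjΛ* - ΛjΛ* α*^k)`.
The map `X ↦ αX - Xα*` telescopes the first sum to `α^k ΛjΛ* - ΛjΛ* α*^k`, so the residual
`αS - Sα* - iΛΛ*` has zero derivative and vanishes at `t = 0`. Given this identity, `ker S(t)` is
`α*`-invariant and killed by `ϑ₁(t)*`, so the controllability of `(α, ϑ₁(t)) = (α, e^{-itα^k}ϑ₁)`,
inherited from `(α, ϑ₁)` because `e^{-itα^k}` is invertible and commutes with `α`, makes `S(t)`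
invertible. A continuous path of invertible Hermitian matrices that starts positive
definite stays positive definite, since the positive definite ones are open and, among the
invertible ones, closed.
-/

open Matrix
open scoped ComplexOrder

/-- The `m×m` signature matrix `j = diag(I_{m₁}, −I_{m₂})`. -/
noncomputable def sigJ (m₁ m₂ : ℕ) : Matrix (Fin m₁ ⊕ Fin m₂) (Fin m₁ ⊕ Fin m₂) ℂ :=
  Matrix.fromBlocks 1 0 0 (-1)

/-- A quadruple `{α, S₀, ϑ₁, ϑ₂}` is admissible if `S₀` is Hermitian positive definite and
`αS₀ − S₀α* = i(ϑ₁ϑ₁* + ϑ₂ϑ₂*)`. -/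
def Admissible {n m₁ m₂ : ℕ} (α S₀ : Matrix (Fin n) (Fin n) ℂ)
    (θ₁ : Matrix (Fin n) (Fin m₁) ℂ) (θ₂ : Matrix (Fin n) (Fin m₂) ℂ) : Prop :=
  S₀.PosDef ∧ α * S₀ - S₀ * αᴴ = Complex.I • (θ₁ * θ₁ᴴ + θ₂ * θ₂ᴴ)

/-- A pair `(α, θ)` is controllable if the columns of `θ, αθ, …, α^{n−1}θ` span `ℂⁿ`. -/
def Controllable {n p : ℕ} (α : Matrix (Fin n) (Fin n) ℂ) (θ : Matrix (Fin n) (Fin p) ℂ) :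
    Prop :=
  Submodule.span ℂ
    {v : Fin n → ℂ | ∃ k : ℕ, k < n ∧ ∃ j : Fin p, v = fun i => (α ^ k * θ) i j} = ⊤

open Finset NormedSpace

theorem mul_sum_pow_mul_mul_pow_sub {R : Type*} [Ring R] (a b x : R) (k : ℕ) :
    a * (∑ ν ∈ range k, a ^ ν * x * b ^ (k - 1 - ν))
      - (∑ ν ∈ range k, a ^ ν * x * b ^ (k - 1 - ν)) * b = a ^ k * x - x * b ^ k := by
  have h := congrArg (· x) ((LinearMap.commute_mulLeft_right (R := ℤ) a b).mul_geom_sum₂ k)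
  simpa [LinearMap.pow_mulLeft, LinearMap.pow_mulRight, mul_assoc, mul_sum, sum_mul] using h

theorem IsSelfAdjoint.sum_pow_mul_mul_star_pow {R : Type*} [Ring R] [StarRing R] {m : R}
    (hm : IsSelfAdjoint m) (a : R) (k : ℕ) :
    IsSelfAdjoint (∑ ν ∈ range k, a ^ ν * m * star a ^ (k - 1 - ν)) := by
  rw [IsSelfAdjoint, star_sum, ← sum_range_reflect]
  refine sum_congr rfl fun ν hν => ?_
  have hν' : k - 1 - (k - 1 - ν) = ν := by have := mem_range.mp hν; omega
  simp only [star_mul, star_pow, star_star, hm.star_eq, hν', mul_assoc]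

section Matrices

variable {ι κ κ₁ κ₂ : Type*} [Fintype κ] [Fintype κ₁] [Fintype κ₂]

theorem Matrix.fromCols_mul_conjTranspose (A : Matrix ι κ₁ ℂ) (B : Matrix ι κ₂ ℂ) :
    fromCols A B * (fromCols A B)ᴴ = A * Aᴴ + B * Bᴴ := by
  rw [conjTranspose_fromCols_eq_fromRows_conjTranspose, fromCols_mul_fromRows]

theorem Matrix.fromCols_mul_sigJ_mul_conjTranspose {m₁ m₂ : ℕ} (A : Matrix ι (Fin m₁) ℂ)
    (B : Matrix ι (Fin m₂) ℂ) :
    fromCols A B * sigJ m₁ m₂ * (fromCols A B)ᴴ = A * Aᴴ - B * Bᴴ := by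
  rw [sigJ, fromCols_mul_fromBlocks, conjTranspose_fromCols_eq_fromRows_conjTranspose,
    fromCols_mul_fromRows]
  simp [sub_eq_add_neg]

theorem Continuous.matrix_fromCols {X m n₁ n₂ R : Type*} [TopologicalSpace X] [TopologicalSpace R]
    {A : X → Matrix m n₁ R} {B : X → Matrix m n₂ R} (hA : Continuous A) (hB : Continuous B) :
    Continuous fun x => fromCols (A x) (B x) :=
  continuous_matrix fun i j => by
    cases j with
    | inl j => exact hA.matrix_elem i j
    | inr j => exact hB.matrix_elem i j

theorem Matrix.isHermitian_sigJ (m₁ m₂ : ℕ) : (sigJ m₁ m₂).IsHermitian := by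
  simp [sigJ, IsHermitian.fromBlocks, isHermitian_one]

variable [Fintype ι]

theorem Matrix.star_dotProduct_mul_conjTranspose_mulVec (θ : Matrix ι κ ℂ) (v : ι → ℂ) :
    star v ⬝ᵥ (θ * θᴴ) *ᵥ v = star (θᴴ *ᵥ v) ⬝ᵥ θᴴ *ᵥ v := by
  rw [← mulVec_mulVec, dotProduct_mulVec, star_mulVec, conjTranspose_conjTranspose]

theorem lyapunov_kernel_step {α S : Matrix ι ι ℂ} {θ₁ : Matrix ι κ₁ ℂ} {θ₂ : Matrix ι κ₂ ℂ}
    (hS : S.IsHermitian) (hlyap : α * S - S * αᴴ = Complex.I • (θ₁ * θ₁ᴴ + θ₂ * θ₂ᴴ))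
    {v : ι → ℂ} (hv : S *ᵥ v = 0) : θ₁ᴴ *ᵥ v = 0 ∧ S *ᵥ (αᴴ *ᵥ v) = 0 := by
  have happly : -(S *ᵥ (αᴴ *ᵥ v)) = Complex.I • ((θ₁ * θ₁ᴴ + θ₂ * θ₂ᴴ) *ᵥ v) := by
    have h := congrArg (· *ᵥ v) hlyap
    rwa [sub_mulVec, ← mulVec_mulVec, ← mulVec_mulVec, hv, mulVec_zero, zero_sub,
      smul_mulVec] at h
  have hvS : star v ⬝ᵥ S *ᵥ (αᴴ *ᵥ v) = 0 := by
    rw [dotProduct_mulVec, ← hS.eq, ← star_mulVec, hv, star_zero, zero_dotProduct]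
  have hform : star (θ₁ᴴ *ᵥ v) ⬝ᵥ θ₁ᴴ *ᵥ v + star (θ₂ᴴ *ᵥ v) ⬝ᵥ θ₂ᴴ *ᵥ v = 0 := by
    have h := congrArg (star v ⬝ᵥ ·) happly
    simpa only [dotProduct_neg, hvS, neg_zero, dotProduct_smul, add_mulVec, dotProduct_add,
      star_dotProduct_mul_conjTranspose_mulVec, smul_eq_mul, mul_eq_zero, Complex.I_ne_zero,
      false_or] using h.symm
  obtain ⟨h₁, h₂⟩ := (add_eq_zero_iff_of_nonneg (dotProduct_star_self_nonneg _)
    (dotProduct_star_self_nonneg _)).mp hform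
  rw [dotProduct_star_self_eq_zero] at h₁ h₂
  refine ⟨h₁, neg_eq_zero.mp ?_⟩
  rw [happly, add_mulVec, ← mulVec_mulVec, ← mulVec_mulVec, h₁, h₂]
  simp

end Matrices

section Controllability

variable {n p : ℕ}

theorem Controllable.mul_left {α U : Matrix (Fin n) (Fin n) ℂ} {θ : Matrix (Fin n) (Fin p) ℂ}
    (h : Controllable α θ) (hU : IsUnit U) (hαU : Commute α U) : Controllable α (U * θ) := by
  have hcol (k : ℕ) (j : Fin p) :
      (fun i => (α ^ k * (U * θ)) i j) = U.mulVecLin fun i => (α ^ k * θ) i j := by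
    ext i
    rw [← Matrix.mul_assoc, (hαU.pow_left k).eq, Matrix.mul_assoc]
    rfl
  have hgen : {v : Fin n → ℂ | ∃ k : ℕ, k < n ∧ ∃ j : Fin p, v = fun i => (α ^ k * (U * θ)) i j}
      = U.mulVecLin '' {v | ∃ k : ℕ, k < n ∧ ∃ j : Fin p, v = fun i => (α ^ k * θ) i j} := by
    ext v
    simp only [Set.mem_ofPred_eq, Set.mem_image, hcol]
    constructor
    · rintro ⟨k, hk, j, rfl⟩
      exact ⟨_, ⟨k, hk, j, rfl⟩, rfl⟩
    · rintro ⟨_, ⟨k, hk, j, rfl⟩, rfl⟩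
      exact ⟨k, hk, j, rfl⟩
  rw [Controllable, hgen, Submodule.span_image, h, Submodule.map_top, LinearMap.range_eq_top]
  exact mulVec_surjective_iff_isUnit.mpr hU

theorem Controllable.eq_zero_of_forall_mulVec_eq_zero {α : Matrix (Fin n) (Fin n) ℂ}
    {θ : Matrix (Fin n) (Fin p) ℂ} (h : Controllable α θ) {v : Fin n → ℂ}
    (hv : ∀ k : ℕ, θᴴ *ᵥ (αᴴ ^ k *ᵥ v) = 0) : v = 0 := by
  have hspan : Submodule.span ℂ
      {v : Fin n → ℂ | ∃ k : ℕ, k < n ∧ ∃ j : Fin p, v = fun i => (α ^ k * θ) i j}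
      ≤ LinearMap.ker (dotProductBilin ℂ ℂ (star v)) := by
    refine Submodule.span_le.mpr ?_
    rintro _ ⟨k, -, j, rfl⟩
    have hj := congrFun (hv k) j
    rw [mulVec_mulVec, ← conjTranspose_pow, ← conjTranspose_mul] at hj
    simpa [mulVec, dotProduct, mul_comm] using congrArg star hj
  rw [h] at hspan
  exact dotProduct_star_self_eq_zero.mp (hspan Submodule.mem_top)

theorem isUnit_of_lyapunov_of_controllable {κ : Type*} [Fintype κ]
    {α S : Matrix (Fin n) (Fin n) ℂ} {θ₁ : Matrix (Fin n) (Fin p) ℂ} {θ₂ : Matrix (Fin n) κ ℂ}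
    (hS : S.IsHermitian) (hlyap : α * S - S * αᴴ = Complex.I • (θ₁ * θ₁ᴴ + θ₂ * θ₂ᴴ))
    (hctrl : Controllable α θ₁) : IsUnit S := by
  refine mulVec_injective_iff_isUnit.mp <| (injective_iff_map_eq_zero S.mulVecLin).mpr
    fun v hv => ?_
  have hiter (k : ℕ) : S *ᵥ (αᴴ ^ k *ᵥ v) = 0 := by
    induction k with
    | zero => simpa using hv
    | succ k ih =>
      rw [pow_succ', ← mulVec_mulVec]
      exact (lyapunov_kernel_step hS hlyap ih).2
  exact hctrl.eq_zero_of_forall_mulVec_eq_zero fun k => (lyapunov_kernel_step hS hlyap (hiter k)).1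

end Controllability

section Positivity

variable {𝕜 ι X : Type*} [RCLike 𝕜] [Fintype ι] [TopologicalSpace X]

theorem Matrix.IsHermitian.posDef_of_forall_mem_sphere {H : Matrix ι ι 𝕜} (hH : H.IsHermitian)
    (h : ∀ v ∈ Metric.sphere (0 : ι → 𝕜) 1, 0 < RCLike.re (star v ⬝ᵥ H *ᵥ v)) : H.PosDef := by
  refine .of_dotProduct_mulVec_pos hH fun v hv => ?_
  have hv' : ‖v‖ ≠ 0 := norm_ne_zero_iff.mpr hv
  have hu : (‖v‖⁻¹ : 𝕜) • v ∈ Metric.sphere (0 : ι → 𝕜) 1 := by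
    simp [norm_smul, hv']
  have hscale : star v ⬝ᵥ H *ᵥ v
      = ((‖v‖ ^ 2 : ℝ) : 𝕜) * (star ((‖v‖⁻¹ : 𝕜) • v) ⬝ᵥ H *ᵥ ((‖v‖⁻¹ : 𝕜) • v)) := by
    simp only [star_smul, smul_dotProduct, mulVec_smul, dotProduct_smul, smul_eq_mul,
      RCLike.star_def, map_inv₀, RCLike.conj_ofReal]
    push_cast
    field_simp
  refine RCLike.pos_iff.mpr ⟨?_, hH.im_star_dotProduct_mulVec_self v⟩
  rw [hscale, RCLike.re_ofReal_mul]
  exact mul_pos (by positivity) (h _ hu)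

theorem isOpen_setOf_posDef {H : X → Matrix ι ι 𝕜} (hH : Continuous H)
    (hherm : ∀ x, (H x).IsHermitian) : IsOpen {x | (H x).PosDef} := by
  have hQ : Continuous fun p : X × (ι → 𝕜) => RCLike.re (star p.2 ⬝ᵥ H p.1 *ᵥ p.2) := by
    fun_prop
  refine isOpen_iff_eventually.mpr fun x₀ hx₀ => ?_
  have hnear : ∀ᶠ x in nhds x₀, ∀ v ∈ Metric.sphere (0 : ι → 𝕜) 1,
      0 < RCLike.re (star v ⬝ᵥ H x *ᵥ v) := by
    refine (isCompact_sphere 0 1).eventually_forall_of_forall_eventually fun v hv => ?_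
    have hv0 : v ≠ 0 := ne_zero_of_mem_unit_sphere ⟨v, hv⟩
    exact continuousAt_const.eventually_lt hQ.continuousAt
      (RCLike.pos_iff.mp (hx₀.dotProduct_mulVec_pos hv0)).1
  filter_upwards [hnear] with x hx using (hherm x).posDef_of_forall_mem_sphere hx

theorem isClosed_setOf_posSemidef {H : X → Matrix ι ι 𝕜} (hH : Continuous H)
    (hherm : ∀ x, (H x).IsHermitian) : IsClosed {x | (H x).PosSemidef} := by
  have hinter : {x | (H x).PosSemidef}
      = ⋂ v : ι → 𝕜, {x | 0 ≤ RCLike.re (star v ⬝ᵥ H x *ᵥ v)} := by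
    ext x
    simp only [Set.mem_ofPred_eq, Set.mem_iInter]
    refine ⟨fun hx v => (RCLike.nonneg_iff.mp (hx.dotProduct_mulVec_nonneg v)).1, fun hx => ?_⟩
    exact .of_dotProduct_mulVec_nonneg (hherm x) fun v =>
      RCLike.nonneg_iff.mpr ⟨hx v, (hherm x).im_star_dotProduct_mulVec_self v⟩
  rw [hinter]
  exact isClosed_iInter fun v => isClosed_le continuous_const (by fun_prop)

theorem posDef_of_isUnit_of_continuous [PreconnectedSpace X] [DecidableEq ι]
    {H : X → Matrix ι ι 𝕜} (hH : Continuous H) (hherm : ∀ x, (H x).IsHermitian)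
    (hunit : ∀ x, IsUnit (H x)) {x₀ : X} (hx₀ : (H x₀).PosDef) (x : X) : (H x).PosDef := by
  have hclopen : IsClopen {x | (H x).PosDef} := by
    have hpsd : {x | (H x).PosDef} = {x | (H x).PosSemidef} :=
      Set.ext fun x => ⟨PosDef.posSemidef, fun h => h.posDef_iff_isUnit.mpr (hunit x)⟩
    exact ⟨hpsd ▸ isClosed_setOf_posSemidef hH hherm, isOpen_setOf_posDef hH hherm⟩
  exact Set.eq_univ_iff_forall.mp (hclopen.eq_univ ⟨x₀, hx₀⟩) x

end Positivity

section Integrals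

variable {ι κ : Type*}

theorem hasDerivAt_apply_of_apply_eq_add_integral {S : ℝ → Matrix ι κ ℂ} {S₀ : Matrix ι κ ℂ}
    {G : ℝ → Matrix ι κ ℂ} (hG : Continuous G)
    (hS : ∀ t i j, S t i j = S₀ i j + ∫ s in (0 : ℝ)..t, G s i j) (t : ℝ) (i : ι) (j : κ) :
    HasDerivAt (fun u => S u i j) (G t i j) t := by
  simp only [hS]
  exact (((hG.matrix_elem i j).integral_hasStrictDerivAt 0 t).hasDerivAt).const_add _

theorem continuous_of_apply_eq_add_integral {S : ℝ → Matrix ι κ ℂ} {S₀ : Matrix ι κ ℂ}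
    {G : ℝ → Matrix ι κ ℂ} (hG : Continuous G)
    (hS : ∀ t i j, S t i j = S₀ i j + ∫ s in (0 : ℝ)..t, G s i j) : Continuous S :=
  continuous_matrix fun i j => continuous_iff_continuousAt.mpr fun t =>
    (hasDerivAt_apply_of_apply_eq_add_integral hG hS t i j).continuousAt

theorem isHermitian_of_apply_eq_add_integral {S S₀ : Matrix ι ι ℂ} {G : ℝ → Matrix ι ι ℂ}
    {a b : ℝ} (hS₀ : S₀.IsHermitian) (hG : ∀ s, (G s).IsHermitian)
    (hS : ∀ i j, S i j = S₀ i j + ∫ s in a..b, G s i j) : S.IsHermitian := by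
  ext i j
  rw [conjTranspose_apply, hS, hS, star_add, hS₀.apply, Complex.star_def,
    ← intervalIntegral.intervalIntegral_conj]
  simp only [← Complex.star_def, (hG _).apply]

end Integrals

section Calculus

attribute [local instance] Matrix.linftyOpNormedAddCommGroup Matrix.linftyOpNormedSpace
  Matrix.linftyOpNormedRing Matrix.linftyOpNormedAlgebra

variable {ι κ : Type*} [Fintype ι] [DecidableEq ι] [Fintype κ]

theorem hasDerivAt_exp_mul_smul (A : Matrix ι ι ℂ) (c : ℂ) (t : ℝ) :
    HasDerivAt (fun u : ℝ => exp ((c * u) • A)) (c • (exp ((c * t) • A) * A)) t := by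
  have hc : HasDerivAt (fun u : ℝ => c * u) c t := by
    simpa using (Complex.ofRealCLM.hasDerivAt (x := t)).const_mul c
  exact (hasDerivAt_exp_smul_const A (c * t : ℂ)).scomp t hc

theorem continuous_exp_mul_smul (A : Matrix ι ι ℂ) (c : ℂ) :
    Continuous fun u : ℝ => exp ((c * u) • A) :=
  continuous_iff_continuousAt.mpr fun t => (hasDerivAt_exp_mul_smul A c t).continuousAt

theorem conjTranspose_exp_mul_smul (A : Matrix ι ι ℂ) (c : ℂ) (u : ℝ) :
    (exp ((c * u) • A))ᴴ = exp ((star c * u) • Aᴴ) := by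
  rw [← Matrix.exp_conjTranspose, conjTranspose_smul, star_mul', Complex.star_def,
    Complex.conj_ofReal]

theorem hasDerivAt_exp_mul_smul_mul_conjTranspose (A : Matrix ι ι ℂ) (θ : Matrix ι κ ℂ) (c : ℂ)
    (t : ℝ) :
    HasDerivAt (fun u : ℝ => exp ((c * u) • A) * θ * (exp ((c * u) • A) * θ)ᴴ)
      (c • (A * (exp ((c * t) • A) * θ * (exp ((c * t) • A) * θ)ᴴ))
        + star c • (exp ((c * t) • A) * θ * (exp ((c * t) • A) * θ)ᴴ * Aᴴ)) t := by
  have hassoc (u : ℝ) : exp ((c * u) • A) * θ * (exp ((c * u) • A) * θ)ᴴ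
      = exp ((c * u) • A) * (θ * θᴴ) * exp ((star c * u) • Aᴴ) := by
    rw [conjTranspose_mul, conjTranspose_exp_mul_smul, Matrix.mul_assoc, Matrix.mul_assoc,
      Matrix.mul_assoc]
  simp only [hassoc]
  refine (((hasDerivAt_exp_mul_smul A c t).mul_const (θ * θᴴ)).fun_mul
    (hasDerivAt_exp_mul_smul Aᴴ (star c) t)).congr_deriv ?_
  have hA : A * exp ((c * t) • A) = exp ((c * t) • A) * A :=
    (Commute.exp_right ((Commute.refl A).smul_right _)).eq
  simp only [smul_mul_assoc, mul_smul_comm, ← mul_assoc, hA]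

theorem hasDerivAt_of_forall_hasDerivAt_apply {m : Type*} [Fintype m] [DecidableEq m]
    [DecidableEq κ] {F : ℝ → Matrix m κ ℂ} {F' : Matrix m κ ℂ} {t : ℝ}
    (h : ∀ i j, HasDerivAt (fun u => F u i j) (F' i j) t) : HasDerivAt F F' t := by
  have hsum (A : Matrix m κ ℂ) : A = ∑ i, ∑ j, A i j • single i j (1 : ℂ) := by
    simp only [smul_single, smul_eq_mul, mul_one]
    exact matrix_eq_sum_single A
  rw [funext fun u => hsum (F u), hsum F']
  exact .fun_sum fun i _ => .fun_sum fun j _ => (h i j).smul_const (single i j (1 : ℂ))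

theorem lyapunov_of_hasDerivAt {α : Matrix ι ι ℂ} {S N M : ℝ → Matrix ι ι ℂ} {k : ℕ}
    (hS : ∀ t, HasDerivAt S (∑ ν ∈ range k, α ^ ν * M t * αᴴ ^ (k - 1 - ν)) t)
    (hN : ∀ t, HasDerivAt N ((-Complex.I) • (α ^ k * M t - M t * αᴴ ^ k)) t)
    (h₀ : α * S 0 - S 0 * αᴴ = Complex.I • N 0) (t : ℝ) :
    α * S t - S t * αᴴ = Complex.I • N t := by
  have hR (u : ℝ) :
      HasDerivAt (fun u => α * S u - S u * αᴴ - Complex.I • N u) 0 u := by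
    refine ((((hS u).const_mul α).sub ((hS u).mul_const αᴴ)).sub
      ((hN u).const_smul Complex.I)).congr_deriv ?_
    rw [mul_sum_pow_mul_mul_pow_sub, smul_smul, mul_neg, Complex.I_mul_I, neg_neg, one_smul,
      sub_self]
  have hconst := is_const_of_deriv_eq_zero (fun u => (hR u).differentiableAt)
    (fun u => (hR u).deriv) t 0
  rwa [h₀, sub_self, sub_eq_zero] at hconst

/-- The paper's `Λ(t) = [ϑ₁(t), ϑ₂(t)]`. -/
noncomputable def flowCols {p₁ p₂ : Type*} (α : Matrix ι ι ℂ) (θ₁ : Matrix ι p₁ ℂ)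
    (θ₂ : Matrix ι p₂ ℂ) (k : ℕ) (t : ℝ) : Matrix ι (p₁ ⊕ p₂) ℂ :=
  fromCols (exp ((-Complex.I * t) • α ^ k) * θ₁) (exp ((Complex.I * t) • α ^ k) * θ₂)

theorem continuous_flowCols {p₁ p₂ : Type*} (α : Matrix ι ι ℂ) (θ₁ : Matrix ι p₁ ℂ)
    (θ₂ : Matrix ι p₂ ℂ) (k : ℕ) : Continuous (flowCols α θ₁ θ₂ k) :=
  ((continuous_exp_mul_smul _ _).matrix_mul continuous_const).matrix_fromCols
    ((continuous_exp_mul_smul _ _).matrix_mul continuous_const)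

variable {m₁ m₂ : ℕ} (α : Matrix ι ι ℂ) (θ₁ : Matrix ι (Fin m₁) ℂ) (θ₂ : Matrix ι (Fin m₂) ℂ)
  (k : ℕ)

theorem hasDerivAt_flowCols_mul_conjTranspose (t : ℝ) :
    HasDerivAt (fun u => flowCols α θ₁ θ₂ k u * (flowCols α θ₁ θ₂ k u)ᴴ)
      ((-Complex.I) • (α ^ k * (flowCols α θ₁ θ₂ k t * sigJ m₁ m₂ * (flowCols α θ₁ θ₂ k t)ᴴ)
        - flowCols α θ₁ θ₂ k t * sigJ m₁ m₂ * (flowCols α θ₁ θ₂ k t)ᴴ * αᴴ ^ k)) t := by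
  simp only [flowCols, fromCols_mul_conjTranspose, fromCols_mul_sigJ_mul_conjTranspose]
  refine ((hasDerivAt_exp_mul_smul_mul_conjTranspose (α ^ k) θ₁ (-Complex.I) t).add
    (hasDerivAt_exp_mul_smul_mul_conjTranspose (α ^ k) θ₂ Complex.I t)).congr_deriv ?_
  simp only [conjTranspose_pow, star_neg, Complex.star_def, Complex.conj_I, neg_neg, mul_sub,
    sub_mul]
  module

theorem lyapunov_flowCols {S₀ : Matrix ι ι ℂ} {S : ℝ → Matrix ι ι ℂ}
    (hS : ∀ (t : ℝ) (p q : ι), S t p q = S₀ p q + ∫ s in (0 : ℝ)..t,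
      (∑ ν ∈ range k, α ^ ν * (flowCols α θ₁ θ₂ k s * sigJ m₁ m₂ * (flowCols α θ₁ θ₂ k s)ᴴ)
        * αᴴ ^ (k - 1 - ν)) p q)
    (h₀ : α * S₀ - S₀ * αᴴ = Complex.I • (θ₁ * θ₁ᴴ + θ₂ * θ₂ᴴ)) (t : ℝ) :
    α * S t - S t * αᴴ = Complex.I • (flowCols α θ₁ θ₂ k t * (flowCols α θ₁ θ₂ k t)ᴴ) := by
  have hcont := continuous_flowCols α θ₁ θ₂ k
  refine lyapunov_of_hasDerivAt (fun t => hasDerivAt_of_forall_hasDerivAt_apply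
    (hasDerivAt_apply_of_apply_eq_add_integral (by fun_prop) hS t))
    (hasDerivAt_flowCols_mul_conjTranspose α θ₁ θ₂ k) ?_ t
  have hS0 : S 0 = S₀ := Matrix.ext fun p q => by simp [hS]
  simp [hS0, h₀, flowCols, fromCols_mul_conjTranspose]

end Calculus

theorem strongly_admissible_nonlinear_flow_general
    {n m₁ m₂ : ℕ} (α S₀ : Matrix (Fin n) (Fin n) ℂ)
    (θ₁ : Matrix (Fin n) (Fin m₁) ℂ) (θ₂ : Matrix (Fin n) (Fin m₂) ℂ)
    (hadm : Admissible α S₀ θ₁ θ₂) (hctrl : Controllable α θ₁)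
    (k : ℕ)
    (ϑ₁ : ℝ → Matrix (Fin n) (Fin m₁) ℂ)
    (hϑ₁ : ∀ t : ℝ, ϑ₁ t = NormedSpace.exp ((-(Complex.I * (t : ℂ))) • α ^ k) * θ₁)
    (ϑ₂ : ℝ → Matrix (Fin n) (Fin m₂) ℂ)
    (hϑ₂ : ∀ t : ℝ, ϑ₂ t = NormedSpace.exp ((Complex.I * (t : ℂ)) • α ^ k) * θ₂)
    (Λ : ℝ → Matrix (Fin n) (Fin m₁ ⊕ Fin m₂) ℂ)
    (hΛ : ∀ t : ℝ, Λ t = Matrix.fromCols (ϑ₁ t) (ϑ₂ t))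
    (S : ℝ → Matrix (Fin n) (Fin n) ℂ)
    (hS : ∀ (t : ℝ) (p q : Fin n),
      S t p q = S₀ p q + ∫ s in (0:ℝ)..t,
        ((∑ ν ∈ Finset.range k,
          α ^ ν * (Λ s * sigJ m₁ m₂ * (Λ s)ᴴ) * (αᴴ) ^ (k - 1 - ν) :
          Matrix (Fin n) (Fin n) ℂ) p q)) :
    ∀ t : ℝ, (S t).PosDef ∧
      (α * S t - S t * αᴴ = Complex.I • (Λ t * (Λ t)ᴴ)) ∧
      Controllable α (ϑ₁ t) ∧
      Admissible α (S t) (ϑ₁ t) (ϑ₂ t) := by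
  obtain ⟨hS₀, h₀⟩ := hadm
  have hgram (t : ℝ) : Λ t * (Λ t)ᴴ = ϑ₁ t * (ϑ₁ t)ᴴ + ϑ₂ t * (ϑ₂ t)ᴴ := by
    rw [hΛ, fromCols_mul_conjTranspose]
  have hctrl' (t : ℝ) : Controllable α (ϑ₁ t) := by
    rw [hϑ₁]
    exact hctrl.mul_left (isUnit_exp _)
      (Commute.exp_right (((Commute.refl α).pow_right k).smul_right _))
  have hflow : Λ = flowCols α θ₁ θ₂ k := funext fun t => by
    rw [hΛ, hϑ₁, hϑ₂, flowCols, neg_mul]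
  subst hflow
  have hlyap := lyapunov_flowCols α θ₁ θ₂ k hS h₀
  have hherm (t : ℝ) : (S t).IsHermitian :=
    isHermitian_of_apply_eq_add_integral hS₀.isHermitian (fun s =>
      IsSelfAdjoint.sum_pow_mul_mul_star_pow (isHermitian_mul_mul_conjTranspose
        (flowCols α θ₁ θ₂ k s) (isHermitian_sigJ m₁ m₂)) α k) (hS t)
  have hS0 : S 0 = S₀ := Matrix.ext fun p q => by simp [hS]
  have hcont := continuous_flowCols α θ₁ θ₂ k
  have hpd := posDef_of_isUnit_of_continuous (continuous_of_apply_eq_add_integral (by fun_prop) hS)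
    hherm (fun t => isUnit_of_lyapunov_of_controllable (hherm t) (hgram t ▸ hlyap t) (hctrl' t))
    (x₀ := 0) (hS0 ▸ hS₀)
  exact fun t => ⟨hpd t, hlyap t, hctrl' t, hpd t, hgram t ▸ hlyap t⟩

/-- for a strongly admissible quadruple and a positive integer `k`, the flow
`ϑ₁(t) = e^{−itα^k}ϑ₁`, `ϑ₂(t) = e^{itα^k}ϑ₂`,
`S(t) = S₀ + ∫₀ᵗ Σ_{ν=1}^{k} α^{ν−1}Λ(s) j Λ(s)* (α*)^{k−ν} ds` produces strongly
admissible quadruples `Σ(t)` for every `t ∈ ℝ`. -/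
theorem strongly_admissible_nonlinear_flow
    {n m₁ m₂ : ℕ} (α S₀ : Matrix (Fin n) (Fin n) ℂ)
    (θ₁ : Matrix (Fin n) (Fin m₁) ℂ) (θ₂ : Matrix (Fin n) (Fin m₂) ℂ)
    (hadm : Admissible α S₀ θ₁ θ₂) (hctrl : Controllable α θ₁)
    (k : ℕ) (hk : 0 < k)
    (ϑ₁ : ℝ → Matrix (Fin n) (Fin m₁) ℂ)
    (hϑ₁ : ∀ t : ℝ, ϑ₁ t = NormedSpace.exp ((-(Complex.I * (t : ℂ))) • α ^ k) * θ₁)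
    (ϑ₂ : ℝ → Matrix (Fin n) (Fin m₂) ℂ)
    (hϑ₂ : ∀ t : ℝ, ϑ₂ t = NormedSpace.exp ((Complex.I * (t : ℂ)) • α ^ k) * θ₂)
    (Λ : ℝ → Matrix (Fin n) (Fin m₁ ⊕ Fin m₂) ℂ)
    (hΛ : ∀ t : ℝ, Λ t = Matrix.fromCols (ϑ₁ t) (ϑ₂ t))
    (S : ℝ → Matrix (Fin n) (Fin n) ℂ)
    (hS : ∀ (t : ℝ) (p q : Fin n),
      S t p q = S₀ p q + ∫ s in (0:ℝ)..t,
        ((∑ ν ∈ Finset.range k,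
          α ^ ν * (Λ s * sigJ m₁ m₂ * (Λ s)ᴴ) * (αᴴ) ^ (k - 1 - ν) :
          Matrix (Fin n) (Fin n) ℂ) p q)) :
    ∀ t : ℝ, (S t).PosDef ∧
      (α * S t - S t * αᴴ = Complex.I • (Λ t * (Λ t)ᴴ)) ∧
      Controllable α (ϑ₁ t) ∧
      Admissible α (S t) (ϑ₁ t) (ϑ₂ t) :=
  strongly_admissible_nonlinear_flow_general α S₀ θ₁ θ₂ hadm hctrl k ϑ₁ hϑ₁ ϑ₂ hϑ₂ Λ hΛ S hS
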